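/- arXiv:math/0503395 — 3 statements merged into one kernel-verified Lean document; each statement's English description precedes it below -/
import Mathlib

section
/- Fix z ∈ D_ε and let f be the function on configurations given by f(η) = η_z. Then L f(η) = Δ*_ε η(z) + V(η)·η_z, where V(η) = N^{-1} Σ_{x,y∈D_ε} h(x)^{-1} p(x,y) (η_x⁺·1_{η_y<0} + η_x⁻·1_{η_y>0}) is the normalized instantaneous annihilation rate of the configuration η. -/
open Finset

/-- The generator of the annihilating–branching particle system applied to
`f(η) = η_z` equals `Δ*_ε η (z) + V(η) · η_z`. -/
theorem generator_on_coordinate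
    {S : Type*} [Fintype S] [DecidableEq S]
    (N : ℕ) (hN : 0 < N)
    (h : S → ℝ) (hh : ∀ x, 0 < h x)
    (p : S → S → ℝ) (hp : ∀ x y, 0 ≤ p x y)
    (η : S → ℤ)
    (hplus : ∑ x, (η x)⁺ = (N : ℤ))
    (hminus : ∑ x, (η x)⁻ = (N : ℤ))
    (z : S)
    (f : (S → ℤ) → ℝ) (hf : ∀ ξ : S → ℤ, f ξ = (ξ z : ℝ))
    (L : ((S → ℤ) → ℝ) → (S → ℤ) → ℝ)
    (hL : ∀ (g : (S → ℤ) → ℝ) (ξ : S → ℤ), L g ξ =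
      ∑ x, ∑ y, (h x)⁻¹ * p x y *
        ( ((ξ x)⁺ : ℝ) * (if 0 ≤ ξ y then 1 else 0) *
            (g (ξ - Pi.single x 1 + Pi.single y 1) - g ξ)
        + ((ξ x)⁻ : ℝ) * (if ξ y ≤ 0 then 1 else 0) *
            (g (ξ + Pi.single x 1 - Pi.single y 1) - g ξ)
        + ((ξ x)⁺ : ℝ) * (if ξ y < 0 then 1 else 0) * ((N : ℝ))⁻¹ ^ 2 *
            ∑ u, ∑ v, ((ξ u)⁺ : ℝ) * ((ξ v)⁻ : ℝ) *
              (g (ξ - Pi.single x 1 + Pi.single y 1 + Pi.single u 1 - Pi.single v 1) - g ξ)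
        + ((ξ x)⁻ : ℝ) * (if 0 < ξ y then 1 else 0) * ((N : ℝ))⁻¹ ^ 2 *
            ∑ u, ∑ v, ((ξ u)⁻ : ℝ) * ((ξ v)⁺ : ℝ) *
              (g (ξ + Pi.single x 1 - Pi.single y 1 - Pi.single u 1 + Pi.single v 1) - g ξ) ))
    (V : (S → ℤ) → ℝ)
    (hV : ∀ ξ : S → ℤ, V ξ = (N : ℝ)⁻¹ * ∑ x, ∑ y, (h x)⁻¹ * p x y *
        ( ((ξ x)⁺ : ℝ) * (if ξ y < 0 then 1 else 0)
        + ((ξ x)⁻ : ℝ) * (if 0 < ξ y then 1 else 0) ))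
    (Δstar : (S → ℝ) → S → ℝ)
    (hΔ : ∀ (g : S → ℝ) (x : S), Δstar g x =
      ∑ y, ((h y)⁻¹ * p y x * g y - (h x)⁻¹ * p x y * g x)) :
    L f η = Δstar (fun x => (η x : ℝ)) z + V η * (η z : ℝ) := by
  have hN' : (N:ℝ) ≠ 0 := Nat.cast_ne_zero.mpr hN.ne'
  have castPos : ∀ n : ℤ, ((n⁺ : ℤ) : ℝ) = ((n : ℝ))⁺ := by
    intro n; simp [posPart_def, Int.cast_max]
  have castNeg : ∀ n : ℤ, ((n⁻ : ℤ) : ℝ) = ((n : ℝ))⁻ := by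
    intro n; simp [negPart_def, Int.cast_max]
  set d : S → ℝ := fun w => (((Pi.single w 1 : S → ℤ) z : ℤ) : ℝ) with hd
  set a : S → ℝ := fun x => ((η x)⁺ : ℝ) with hadef
  set b : S → ℝ := fun x => ((η x)⁻ : ℝ) with hbdef
  have ha : ∑ x, a x = (N:ℝ) := by
    have := congrArg (fun t : ℤ => (t : ℝ)) hplus
    simp only [Int.cast_sum, castPos, Int.cast_natCast] at this
    simpa [hadef] using this
  have hb : ∑ x, b x = (N:ℝ) := by
    have := congrArg (fun t : ℤ => (t : ℝ)) hminus
    simp only [Int.cast_sum, castNeg, Int.cast_natCast] at this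
    simpa [hbdef] using this
  have hab : ∀ x, a x - b x = ((η x : ℤ) : ℝ) := by
    intro x; exact posPart_sub_negPart _
  have haz : ∑ u, a u * d u = a z := by
    simp [hd, Pi.single_apply, mul_ite, Finset.sum_ite_eq]
  have hbz : ∑ u, b u * d u = b z := by
    simp [hd, Pi.single_apply, mul_ite, Finset.sum_ite_eq]
  -- finite differences of f
  have h1 : ∀ x y : S, f (η - Pi.single x 1 + Pi.single y 1) - f η = d y - d x := by
    intro x y
    simp only [hf, Pi.add_apply, Pi.sub_apply, hd]
    push_cast
    ring
  have h2 : ∀ x y : S, f (η + Pi.single x 1 - Pi.single y 1) - f η = d x - d y := by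
    intro x y
    simp only [hf, Pi.add_apply, Pi.sub_apply, hd]
    push_cast
    ring
  have h3 : ∀ x y u v : S,
      f (η - Pi.single x 1 + Pi.single y 1 + Pi.single u 1 - Pi.single v 1) - f η
        = (d y - d x) + (d u - d v) := by
    intro x y u v
    simp only [hf, Pi.add_apply, Pi.sub_apply, hd]
    push_cast
    ring
  have h4 : ∀ x y u v : S,
      f (η + Pi.single x 1 - Pi.single y 1 - Pi.single u 1 + Pi.single v 1) - f η
        = (d x - d y) + (d v - d u) := by
    intro x y u v
    simp only [hf, Pi.add_apply, Pi.sub_apply, hd]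
    push_cast
    ring
  -- collapsing the inner double sums
  have hinner1 : ∀ D : ℝ,
      ∑ u, ∑ v, a u * b v * (D + (d u - d v)) = (N:ℝ) * N * D + N * ((η z : ℤ) : ℝ) := by
    intro D
    have inner_u : ∀ u : S, ∑ v, a u * b v * (D + (d u - d v))
        = a u * ((D + d u) * (N:ℝ) - b z) := by
      intro u
      have e0 : ∀ v : S, a u * b v * (D + (d u - d v))
          = (a u * (D + d u)) * b v - a u * (b v * d v) := fun v => by ring
      simp only [e0]
      rw [Finset.sum_sub_distrib, ← Finset.mul_sum, ← Finset.mul_sum, hb, hbz]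
      ring
    simp only [inner_u]
    have e1 : ∀ u : S, a u * ((D + d u) * (N:ℝ) - b z)
        = (D * N - b z) * a u + (N:ℝ) * (a u * d u) := fun u => by ring
    simp only [e1]
    rw [Finset.sum_add_distrib, ← Finset.mul_sum, ← Finset.mul_sum, ha, haz, ← hab z]
    ring
  have hinner2 : ∀ D : ℝ,
      ∑ u, ∑ v, b u * a v * (D + (d v - d u)) = (N:ℝ) * N * D + N * ((η z : ℤ) : ℝ) := by
    intro D
    have inner_u : ∀ u : S, ∑ v, b u * a v * (D + (d v - d u))
        = b u * ((D - d u) * (N:ℝ) + a z) := by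
      intro u
      have e0 : ∀ v : S, b u * a v * (D + (d v - d u))
          = (b u * (D - d u)) * a v + b u * (a v * d v) := fun v => by ring
      simp only [e0]
      rw [Finset.sum_add_distrib, ← Finset.mul_sum, ← Finset.mul_sum, ha, haz]
      ring
    simp only [inner_u]
    have e1 : ∀ u : S, b u * ((D - d u) * (N:ℝ) + a z)
        = (D * N + a z) * b u - (N:ℝ) * (b u * d u) := fun u => by ring
    simp only [e1]
    rw [Finset.sum_sub_distrib, ← Finset.mul_sum, ← Finset.mul_sum, hb, hbz, ← hab z]
    ring
  have hi1 : ∀ y : S, (if 0 ≤ η y then (1:ℝ) else 0) = 1 - (if η y < 0 then 1 else 0) := by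
    intro y
    by_cases hy : η y < 0
    · simp [hy, not_le.mpr hy]
    · simp [hy, not_lt.mp hy]
  have hi2 : ∀ y : S, (if η y ≤ 0 then (1:ℝ) else 0) = 1 - (if 0 < η y then 1 else 0) := by
    intro y
    by_cases hy : 0 < η y
    · simp [hy, not_le.mpr hy]
    · simp [hy, not_lt.mp hy]
  have key : L f η = ∑ x, ∑ y, (h x)⁻¹ * p x y *
      ((a x - b x) * (d y - d x)
        + (N:ℝ)⁻¹ * ((η z : ℤ) : ℝ) *
          (a x * (if η y < 0 then 1 else 0) + b x * (if 0 < η y then 1 else 0))) := by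
    rw [hL]
    refine Finset.sum_congr rfl fun x _ => Finset.sum_congr rfl fun y _ => ?_
    rw [h1 x y, h2 x y]
    simp only [h3 x y, h4 x y]
    rw [hinner1 (d y - d x), hinner2 (d x - d y), hi1 y, hi2 y]
    have hc1 : (N:ℝ)⁻¹ ^ 2 * ((N:ℝ) * (N:ℝ)) = 1 := by
      rw [sq]; field_simp
    have hc2 : (N:ℝ)⁻¹ ^ 2 * (N:ℝ) = (N:ℝ)⁻¹ := by
      rw [sq]; field_simp
    linear_combination
      ((h x)⁻¹ * p x y * (a x * (if η y < 0 then (1:ℝ) else 0) * (d y - d x)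
        + b x * (if 0 < η y then (1:ℝ) else 0) * (d x - d y))) * hc1
      + ((h x)⁻¹ * p x y * (a x * (if η y < 0 then (1:ℝ) else 0)
        + b x * (if 0 < η y then (1:ℝ) else 0)) * ((η z : ℤ) : ℝ)) * hc2
  simp only [hab] at key
  rw [key, hΔ, hV]
  have split : ∀ x y : S, (h x)⁻¹ * p x y *
      (((η x : ℤ) : ℝ) * (d y - d x)
        + (N:ℝ)⁻¹ * ((η z : ℤ) : ℝ) *
          (a x * (if η y < 0 then 1 else 0) + b x * (if 0 < η y then 1 else 0)))
      = (h x)⁻¹ * p x y * (((η x : ℤ) : ℝ) * (d y - d x))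
        + ((N:ℝ)⁻¹ * ((η z : ℤ) : ℝ)) *
          ((h x)⁻¹ * p x y * (a x * (if η y < 0 then 1 else 0)
            + b x * (if 0 < η y then 1 else 0))) := by
    intro x y; ring
  simp only [split, Finset.sum_add_distrib, ← Finset.mul_sum]
  have part1 : ∑ x, ∑ y, (h x)⁻¹ * p x y * (((η x : ℤ) : ℝ) * (d y - d x))
      = ∑ y, ((h y)⁻¹ * p y z * ((η y : ℤ) : ℝ) - (h z)⁻¹ * p z y * ((η z : ℤ) : ℝ)) := by
    have e1 : ∀ x : S, ∑ y, (h x)⁻¹ * p x y * (((η x : ℤ) : ℝ) * (d y - d x))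
        = (h x)⁻¹ * p x z * ((η x : ℤ) : ℝ)
          - (∑ y, (h x)⁻¹ * p x y * ((η x : ℤ) : ℝ)) * d x := by
      intro x
      have e0 : ∀ y : S, (h x)⁻¹ * p x y * (((η x : ℤ) : ℝ) * (d y - d x))
          = ((h x)⁻¹ * p x y * ((η x : ℤ) : ℝ)) * d y
            - ((h x)⁻¹ * p x y * ((η x : ℤ) : ℝ)) * d x := fun y => by ring
      simp only [e0]
      rw [Finset.sum_sub_distrib, ← Finset.sum_mul]
      congr 1
      simp [hd, Pi.single_apply, mul_ite, Finset.sum_ite_eq]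
    simp only [e1]
    rw [Finset.sum_sub_distrib, Finset.sum_sub_distrib]
    congr 1
    rw [Finset.sum_eq_single z]
    · have hdz1 : d z = 1 := by simp [hd]
      rw [hdz1, mul_one]
    · intro x _ hx
      have hdx : d x = 0 := by simp [hd, Pi.single_apply, if_neg (Ne.symm hx)]
      rw [hdx, mul_zero]
    · intro hz; exact absurd (Finset.mem_univ z) hz
  rw [part1]
  ring
end

section
/- Let t ≥ 0, λ ≥ 0, and let V : ℝ → ℝ be integrable on [0,t] with V(s) ≥ 0 for all s ∈ [0,t]. Then ∫₀ᵗ V(s) · exp( 2 ∫ₛᵗ (V(r) − λ) dr ) ds ≤ (λ t + 1/2) · exp( 2 ∫₀ᵗ V(r) dr ). -/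
/-!
Dropping `λ` only enlarges the integrand, since `V ≥ 0`. The remaining integral is computed
exactly: `s ↦ exp (2 ∫ₛᵗ V)` is absolutely continuous with derivative `-2 V(s) exp (2 ∫ₛᵗ V)`
almost everywhere, so the fundamental theorem of calculus for absolutely continuous functions
gives `∫₀ᵗ V(s) exp (2 ∫ₛᵗ V) ds = (exp (2 ∫₀ᵗ V) - 1) / 2`.
-/

open MeasureTheory intervalIntegral Set Filter

theorem LipschitzOnWith.comp_absolutelyContinuousOnInterval {X Y : Type*} [PseudoMetricSpace X]
    [PseudoMetricSpace Y] {g : X → Y} {K : NNReal} {s : Set X} {f : ℝ → X} {a b : ℝ}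
    (hg : LipschitzOnWith K g s) (hf : AbsolutelyContinuousOnInterval f a b)
    (hfs : MapsTo f (uIcc a b) s) : AbsolutelyContinuousOnInterval (g ∘ f) a b := by
  have hKf := Tendsto.const_mul (K : ℝ) hf
  rw [mul_zero] at hKf
  refine squeeze_zero' (.of_forall fun _ ↦ Finset.sum_nonneg fun _ _ ↦ dist_nonneg) ?_ hKf
  filter_upwards [mem_inf_of_right (mem_principal_self _)] with E hE
  rw [Finset.mul_sum]
  exact Finset.sum_le_sum fun i hi ↦ hg.dist_le_mul _ (hfs (hE.1 i hi).1) _ (hfs (hE.1 i hi).2)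

theorem LocallyLipschitz.comp_absolutelyContinuousOnInterval {E Y : Type*}
    [SeminormedAddCommGroup E] [PseudoMetricSpace Y] {g : E → Y} {f : ℝ → E} {a b : ℝ}
    (hg : LocallyLipschitz g) (hf : AbsolutelyContinuousOnInterval f a b) :
    AbsolutelyContinuousOnInterval (g ∘ f) a b := by
  obtain ⟨K, hK⟩ := hg.locallyLipschitzOn.exists_lipschitzOnWith_of_compact
    (isCompact_uIcc.image_of_continuousOn hf.continuousOn)
  exact hK.comp_absolutelyContinuousOnInterval hf (mapsTo_image f _)

theorem integral_mul_exp_const_mul_integral {f : ℝ → ℝ} {a b : ℝ}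
    (hf : IntervalIntegrable f volume a b) {c : ℝ} (hc : c ≠ 0) :
    ∫ s in a..b, f s * Real.exp (c * ∫ r in s..b, f r)
      = (Real.exp (c * ∫ r in a..b, f r) - 1) / c := by
  set F : ℝ → ℝ := fun s ↦ Real.exp (c * ∫ r in s..b, f r)
  have hF_eq : F = fun s ↦ Real.exp (-c * ∫ r in b..s, f r) := by
    funext s
    simp [F, integral_symm b s]
  have hF : AbsolutelyContinuousOnInterval F a b := by
    rw [hF_eq]
    exact Real.contDiff_exp.locallyLipschitz.comp_absolutelyContinuousOnInterval
      ((hf.absolutelyContinuousOnInterval_intervalIntegral right_mem_uIcc).const_mul (-c))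
  have hF_deriv : ∀ᵐ s, s ∈ uIoc a b → deriv F s = -c * (f s * F s) := by
    filter_upwards [hf.ae_hasDerivAt_integral] with s hs hsab
    rw [hF_eq, ((hs (uIoc_subset_uIcc hsab) b right_mem_uIcc).const_mul (-c)).exp.deriv]
    ring
  have hFTC := hF.integral_deriv_eq_sub
  rw [integral_congr_ae hF_deriv, intervalIntegral.integral_const_mul] at hFTC
  simp only [F, integral_same, mul_zero, Real.exp_zero] at hFTC
  field_simp
  linarith

/-- The a priori bound
`∫₀ᵗ V(s) e^{2∫ₛᵗ (V(r) − λ) dr} ds ≤ (λ t + 1/2) e^{2∫₀ᵗ V(r) dr}`. -/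
theorem integral_exp_bound
    (t lam : ℝ) (ht : 0 ≤ t) (hlam : 0 ≤ lam)
    (V : ℝ → ℝ) (hV : IntegrableOn V (Set.Icc 0 t))
    (hVpos : ∀ s ∈ Set.Icc (0 : ℝ) t, 0 ≤ V s) :
    (∫ s in (0 : ℝ)..t, V s * Real.exp (2 * ∫ r in s..t, (V r - lam)))
      ≤ (lam * t + 1 / 2) * Real.exp (2 * ∫ r in (0 : ℝ)..t, V r) := by
  rw [← uIcc_of_le ht] at hV hVpos
  have hVi : IntervalIntegrable V volume 0 t := hV.intervalIntegrable
  have hV_cont := continuousOn_primitive_interval_left hV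
  have hVlam_cont : ContinuousOn (fun s ↦ ∫ r in s..t, (V r - lam)) (uIcc 0 t) :=
    continuousOn_primitive_interval_left (hV.sub (integrableOn_const (by simp)))
  have hdrift : ∀ s ∈ uIcc 0 t, ∫ r in s..t, (V r - lam) ≤ ∫ r in s..t, V r := by
    intro s hs
    have hVs := hVi.mono_set (uIcc_subset_uIcc hs right_mem_uIcc)
    rw [uIcc_of_le ht] at hs
    exact integral_mono_on hs.2 (hVs.sub intervalIntegrable_const) hVs fun r _ ↦ by linarith
  calc (∫ s in (0 : ℝ)..t, V s * Real.exp (2 * ∫ r in s..t, (V r - lam)))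
      ≤ ∫ s in (0 : ℝ)..t, V s * Real.exp (2 * ∫ r in s..t, V r) := by
        refine integral_mono_on ht (hVi.mul_continuousOn (by fun_prop))
          (hVi.mul_continuousOn (by fun_prop)) fun s hs ↦ ?_
        rw [← uIcc_of_le ht] at hs
        gcongr
        · exact hVpos s hs
        · exact hdrift s hs
    _ = (Real.exp (2 * ∫ r in (0 : ℝ)..t, V r) - 1) / 2 :=
        integral_mul_exp_const_mul_integral hVi two_ne_zero
    _ ≤ (lam * t + 1 / 2) * Real.exp (2 * ∫ r in (0 : ℝ)..t, V r) := by
        nlinarith [Real.exp_pos (2 * ∫ r in (0 : ℝ)..t, V r), mul_nonneg hlam ht]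
end

section
/- Let t ≥ 0, c ≥ 0, let V : ℝ → ℝ be integrable on [0,t] with V ≥ 0 on [0,t], and let g : ℝ → ℝ be measurable with |g(s)| ≤ c for all s ∈ [0,t]. Define R₃(r) = ∫₀ʳ exp( ∫ₛʳ V(u) du ) g(s) ds for r ∈ [0,t]. Then for all 0 ≤ t₁ ≤ t₂ ≤ t, |R₃(t₂) − R₃(t₁)| ≤ c · exp( ∫₀ᵗ V(r) dr ) · (t₂ − t₁) + c · t · ( exp( ∫_{t₁}^{t₂} V(r) dr ) − 1 ) · exp( ∫₀ᵗ V(r) dr ). -/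
/-!
`R₃` is the variation-of-constants solution of `R' = V R + g`, `R 0 = 0`, so
`R₃ t₂ = exp (∫ t₁..t₂, V) * R₃ t₁ + ∫ s in t₁..t₂, exp (∫ s..t₂, V) * g s`.
Since `V ≥ 0`, every kernel `exp (∫ s..r, V)` with `0 ≤ s ≤ r ≤ t` is at most `exp (∫ 0..t, V)`;
this bounds `|R₃ t₁|` by `c t exp (∫ 0..t, V)` and the last integral by
`c (t₂ - t₁) exp (∫ 0..t, V)`.
-/

open MeasureTheory intervalIntegral Set

section ExpKernel

variable {V g : ℝ → ℝ}

theorem intervalIntegrable_exp_integral_mul {a b : ℝ} (hV : IntegrableOn V (uIcc a b))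
    (hg : IntervalIntegrable g volume a b) :
    IntervalIntegrable (fun s => Real.exp (∫ u in s..b, V u) * g s) volume a b :=
  hg.continuousOn_mul (continuousOn_primitive_interval_left hV).rexp

theorem exp_integral_mono_interval {a T s r : ℝ} (hV : IntegrableOn V (Icc a T))
    (hV₀ : ∀ u ∈ Icc a T, 0 ≤ V u) (has : a ≤ s) (hsr : s ≤ r) (hrT : r ≤ T) :
    Real.exp (∫ u in s..r, V u) ≤ Real.exp (∫ u in a..T, V u) := by
  refine Real.exp_le_exp.2 (integral_mono_interval has hsr hrT ?_ ?_)
  · exact ae_restrict_of_forall_mem measurableSet_Ioc fun u hu => hV₀ u (Ioc_subset_Icc_self hu)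
  · exact (intervalIntegrable_iff_integrableOn_Icc_of_le (has.trans (hsr.trans hrT))).2 hV

theorem integral_exp_integral_mul_eq_exp_mul_add {a r₁ r₂ : ℝ} (hV : IntegrableOn V (Icc a r₂))
    (hg : IntervalIntegrable g volume a r₂) (h₁ : a ≤ r₁) (h₂ : r₁ ≤ r₂) :
    ∫ s in a..r₂, Real.exp (∫ u in s..r₂, V u) * g s
      = Real.exp (∫ u in r₁..r₂, V u) * (∫ s in a..r₁, Real.exp (∫ u in s..r₁, V u) * g s)
        + ∫ s in r₁..r₂, Real.exp (∫ u in s..r₂, V u) * g s := by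
  have hVi : ∀ x y, x ∈ Icc a r₂ → y ∈ Icc a r₂ → IntervalIntegrable V volume x y :=
    fun x y hx hy => (hV.mono_set (uIcc_subset_Icc hx hy)).intervalIntegrable
  have hr₁ : r₁ ∈ Icc a r₂ := ⟨h₁, h₂⟩
  have hr₂ : r₂ ∈ Icc a r₂ := ⟨h₁.trans h₂, le_rfl⟩
  have hI := intervalIntegrable_exp_integral_mul (by rwa [uIcc_of_le (h₁.trans h₂)]) hg
  have hr₁' : r₁ ∈ uIcc a r₂ := Icc_subset_uIcc hr₁
  rw [← integral_add_adjacent_intervals (hI.mono_set (uIcc_subset_uIcc_left hr₁'))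
    (hI.mono_set (uIcc_subset_uIcc_right hr₁')), ← intervalIntegral.integral_const_mul]
  congr 1
  refine integral_congr fun s hs => ?_
  rw [uIcc_of_le h₁] at hs
  have hs' : s ∈ Icc a r₂ := ⟨hs.1, hs.2.trans h₂⟩
  rw [← integral_add_adjacent_intervals (hVi s r₁ hs' hr₁) (hVi r₁ r₂ hr₁ hr₂), Real.exp_add]
  ring

theorem abs_integral_exp_integral_mul_le {a T r₁ r₂ c : ℝ} (hV : IntegrableOn V (Icc a T))
    (hV₀ : ∀ u ∈ Icc a T, 0 ≤ V u) (hg : ∀ s ∈ Icc a T, |g s| ≤ c)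
    (h₁ : a ≤ r₁) (h₂ : r₁ ≤ r₂) (hT : r₂ ≤ T) :
    |∫ s in r₁..r₂, Real.exp (∫ u in s..r₂, V u) * g s|
      ≤ c * Real.exp (∫ u in a..T, V u) * (r₂ - r₁) := by
  have := norm_integral_le_of_norm_le_const (a := r₁) (b := r₂)
    (f := fun s => Real.exp (∫ u in s..r₂, V u) * g s) (C := Real.exp (∫ u in a..T, V u) * c)
    fun s hs => by
      rw [uIoc_of_le h₂] at hs
      have has : a ≤ s := h₁.trans hs.1.le
      rw [Real.norm_eq_abs, abs_mul, Real.abs_exp]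
      exact mul_le_mul (exp_integral_mono_interval hV hV₀ has hs.2 hT)
        (hg s ⟨has, hs.2.trans hT⟩) (abs_nonneg _) (Real.exp_pos _).le
  rwa [Real.norm_eq_abs, abs_of_nonneg (sub_nonneg.2 h₂), mul_comm (Real.exp _)] at this

end ExpKernel

theorem R3_modulus_of_continuity_general
    (t c : ℝ) (ht : 0 ≤ t)
    (V g : ℝ → ℝ) (hgmeas : Measurable g)
    (hV : IntegrableOn V (Set.Icc 0 t))
    (hVpos : ∀ s ∈ Set.Icc (0 : ℝ) t, 0 ≤ V s)
    (hg : ∀ s ∈ Set.Icc (0 : ℝ) t, |g s| ≤ c)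
    (R₃ : ℝ → ℝ)
    (hR₃ : ∀ r, R₃ r = ∫ s in (0 : ℝ)..r, Real.exp (∫ u in s..r, V u) * g s)
    (t₁ t₂ : ℝ) (h01 : 0 ≤ t₁) (h12 : t₁ ≤ t₂) (h2t : t₂ ≤ t) :
    |R₃ t₂ - R₃ t₁|
      ≤ c * Real.exp (∫ r in (0 : ℝ)..t, V r) * (t₂ - t₁)
        + c * t * (Real.exp (∫ r in t₁..t₂, V r) - 1)
            * Real.exp (∫ r in (0 : ℝ)..t, V r) := by
  have hc : 0 ≤ c := (abs_nonneg _).trans (hg 0 ⟨le_rfl, ht⟩)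
  have hgi : IntervalIntegrable g volume 0 t₂ :=
    ((IntegrableOn.of_bound measure_Icc_lt_top hgmeas.aestronglyMeasurable c
      (ae_restrict_of_forall_mem measurableSet_Icc hg)).mono_set
      (uIcc_subset_Icc ⟨le_rfl, ht⟩ ⟨h01.trans h12, h2t⟩)).intervalIntegrable
  set J := ∫ r in t₁..t₂, V r
  set E := Real.exp (∫ r in (0 : ℝ)..t, V r)
  have hstep : R₃ t₂ = Real.exp J * R₃ t₁ + ∫ s in t₁..t₂, Real.exp (∫ u in s..t₂, V u) * g s := by
    rw [hR₃, hR₃]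
    exact integral_exp_integral_mul_eq_exp_mul_add (hV.mono_set (Icc_subset_Icc_right h2t))
      hgi h01 h12
  have hJ : 1 ≤ Real.exp J :=
    Real.one_le_exp (integral_nonneg h12 fun u hu => hVpos u ⟨h01.trans hu.1, hu.2.trans h2t⟩)
  have hR₁ : |R₃ t₁| ≤ c * E * t := by
    rw [hR₃]
    refine (abs_integral_exp_integral_mul_le hV hVpos hg le_rfl h01 (h12.trans h2t)).trans ?_
    gcongr
    linarith
  have htail := abs_integral_exp_integral_mul_le hV hVpos hg h01 h12 h2t
  calc |R₃ t₂ - R₃ t₁|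
      = |(Real.exp J - 1) * R₃ t₁ + ∫ s in t₁..t₂, Real.exp (∫ u in s..t₂, V u) * g s| := by
        rw [hstep]; ring_nf
    _ ≤ (Real.exp J - 1) * (c * E * t) + c * E * (t₂ - t₁) := by
        refine (abs_add_le _ _).trans (add_le_add ?_ htail)
        rw [abs_mul, abs_of_nonneg (sub_nonneg.2 hJ)]
        gcongr
    _ = _ := by ring

/-- Modulus-of-continuity estimate for `R₃(r) = ∫₀ʳ e^{∫ₛʳ V(u) du} g(s) ds`. -/
theorem R3_modulus_of_continuity
    (t c : ℝ) (ht : 0 ≤ t) (hc : 0 ≤ c)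
    (V g : ℝ → ℝ) (hVmeas : Measurable V) (hgmeas : Measurable g)
    (hV : IntegrableOn V (Set.Icc 0 t))
    (hVpos : ∀ s ∈ Set.Icc (0 : ℝ) t, 0 ≤ V s)
    (hg : ∀ s ∈ Set.Icc (0 : ℝ) t, |g s| ≤ c)
    (R₃ : ℝ → ℝ)
    (hR₃ : ∀ r, R₃ r = ∫ s in (0 : ℝ)..r, Real.exp (∫ u in s..r, V u) * g s)
    (t₁ t₂ : ℝ) (h01 : 0 ≤ t₁) (h12 : t₁ ≤ t₂) (h2t : t₂ ≤ t) :
    |R₃ t₂ - R₃ t₁|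
      ≤ c * Real.exp (∫ r in (0 : ℝ)..t, V r) * (t₂ - t₁)
        + c * t * (Real.exp (∫ r in t₁..t₂, V r) - 1)
            * Real.exp (∫ r in (0 : ℝ)..t, V r) :=
  R3_modulus_of_continuity_general t c ht V g hgmeas hV hVpos hg R₃ hR₃ t₁ t₂ h01 h12 h2t
end
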